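/- arXiv:2402.07952 — 2 statements merged into one kernel-verified Lean document; each statement's English description precedes it below -/
import Mathlib

section
/- Let a : ℕ → ℂ be an arbitrary sequence, let t ∈ ℂ with t ≠ 0 and t ≠ 1, and let n ≥ 1 be an integer. Then ∑_{π ∈ P(n)} t^{k(π)−1} ((t−1)/t)^{Q(π)−1} ∑_{j=1}^{s(π)} a(l(π) − s(π) + j) = ∑_{d ∣ n} t^d ∑_{i=1}^{d} a(i)/t^i. -/
open Finset

/-- `k(π)`: number of parts of the partition `π`, counted with multiplicity. -/
def kParts {n : ℕ} (π : n.Partition) : ℕ := Multiset.card π.parts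

/-- `Q(π)`: number of distinct parts of the partition `π`. -/
def qParts {n : ℕ} (π : n.Partition) : ℕ := π.parts.toFinset.card

/-- `l(π)`: largest part of the partition `π` (`0` for the empty partition). -/
def lPart {n : ℕ} (π : n.Partition) : ℕ := π.parts.sup

/-- `s(π)`: smallest part of the partition `π` (`0` for the empty partition). -/
def sPart {n : ℕ} (π : n.Partition) : ℕ := π.parts.toFinset.min.untopD 0

/-!
Write `w(M) = t^(k - Q) (t - 1)^(Q - 1)` for the weight of a partition `M`; clearing the powers
of `t`, this is the weight in the sum. Exchanging summations, the coefficient of `a i` on the left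
is the total weight `S(n, i)` of the partitions of `n` whose parts all lie in the window
`(l - i, l]` below their largest part `l ≥ i`; on the right it is `∑_{d ∣ n, d ≥ i} t^(d - i)`.
Both vanish for `i > n` and satisfy `S(n, m) = t S(n, m + 1) + [m ∣ n]`.

For the partition side, comparing weights partition by partition gives
`S(n, m) - t S(n, m + 1) = L(n, m) - C(n, m)`, where `L(n, m)` is the weight of the partitions
with largest part `m` and `C(n, m)` that of the partitions with `l - s ≤ m < l`, each enlarged by
a part `l - m`. Removing a part `m`, respectively replacing the largest part `l` by `l - m`, shows
that from `n = N` to `n = N + m` both `L` and `C` grow by `(t - 1)` times the weight of the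
partitions of `N` with parts at most `m`. So `L - C` is `m`-periodic in `n`, hence `[m ∣ n]`.
-/

theorem Multiset.sup_mem_of_ne_zero {M : Multiset ℕ} (hM : M ≠ 0) : M.sup ∈ M := by
  obtain ⟨x, hx, hsup⟩ := M.toFinset.exists_mem_eq_sup (Multiset.toFinset_nonempty.2 hM) id
  have : M.toFinset.sup id = M.sup := by simp [Finset.sup_def, Multiset.toFinset]
  rw [← this, hsup]
  exact Multiset.mem_toFinset.1 hx

theorem sup_mem_of_lt_sup {M : Multiset ℕ} {m : ℕ} (hl : m < M.sup) : M.sup ∈ M :=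
  Multiset.sup_mem_of_ne_zero (by rintro rfl; simp at hl)

theorem mem_iff_sup_eq_of_sup_le {M : Multiset ℕ} (hM : M ≠ 0) {m : ℕ} (h : M.sup ≤ m) :
    m ∈ M ↔ M.sup = m :=
  ⟨fun hm => h.antisymm (Multiset.le_sup hm), fun hm => hm ▸ Multiset.sup_mem_of_ne_zero hM⟩

def minPart (M : Multiset ℕ) : ℕ := M.toFinset.min.untopD 0

theorem minPart_mem {M : Multiset ℕ} (hM : M ≠ 0) : minPart M ∈ M := by
  obtain ⟨x, hx⟩ := Finset.min_of_nonempty (Multiset.toFinset_nonempty.2 hM)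
  rw [minPart, hx, WithTop.untopD_coe]
  exact Multiset.mem_toFinset.1 (Finset.mem_of_min hx)

theorem minPart_le {M : Multiset ℕ} {x : ℕ} (hx : x ∈ M) : minPart M ≤ x := by
  obtain ⟨y, hy⟩ := Finset.min_of_mem (Multiset.mem_toFinset.2 hx)
  have hyx := Finset.min_le (Multiset.mem_toFinset.2 hx)
  rw [hy, WithTop.coe_le_coe] at hyx
  rwa [minPart, hy, WithTop.untopD_coe]

theorem minPart_cons_of_forall_le {M : Multiset ℕ} {c : ℕ} (h : ∀ x ∈ M, c ≤ x) :
    minPart (c ::ₘ M) = c := by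
  rw [minPart, Multiset.toFinset_cons, Finset.min_insert,
    min_eq_left (Finset.le_min fun x hx =>
      WithTop.coe_le_coe.2 (h x (Multiset.mem_toFinset.1 hx))), WithTop.untopD_coe]

theorem minPart_le_sup (M : Multiset ℕ) : minPart M ≤ M.sup := by
  rcases eq_or_ne M 0 with rfl | hM
  · rfl
  · exact (minPart_le (minPart_mem hM)).trans (Multiset.le_sup (minPart_mem hM))

theorem minPart_add_mem_iff {M : Multiset ℕ} (hM : M ≠ 0) {m : ℕ}
    (h : M.sup - minPart M ≤ m) : minPart M + m ∈ M ↔ M.sup - minPart M = m := by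
  have hsl := minPart_le_sup M
  refine ⟨fun hx => ?_, fun hx => ?_⟩
  · have := Multiset.le_sup hx
    omega
  · rw [show minPart M + m = M.sup by omega]
    exact Multiset.sup_mem_of_ne_zero hM

theorem sup_sub_mem_iff {M : Multiset ℕ} {m : ℕ} (h : M.sup - minPart M ≤ m) (hm : m < M.sup) :
    M.sup - m ∈ M ↔ M.sup - minPart M = m := by
  have hM : M ≠ 0 := by rintro rfl; simp at hm
  have hsl := minPart_le_sup M
  refine ⟨fun hx => ?_, fun hx => ?_⟩
  · have := minPart_le hx
    omega
  · rw [show M.sup - m = minPart M by omega]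
    exact minPart_mem hM

section Weight

variable {R : Type*} [CommRing R] (t : R)

def partWeight (M : Multiset ℕ) : R :=
  t ^ (Multiset.card M - M.toFinset.card) * (t - 1) ^ (M.toFinset.card - 1)

theorem partWeight_cons {M : Multiset ℕ} (hM : M ≠ 0) (c : ℕ) :
    partWeight t (c ::ₘ M) = (if c ∈ M then t else t - 1) * partWeight t M := by
  have hQ : 0 < M.toFinset.card := Finset.card_pos.2 (Multiset.toFinset_nonempty.2 hM)
  have hQk : M.toFinset.card ≤ Multiset.card M := Multiset.toFinset_card_le M
  unfold partWeight
  rw [Multiset.toFinset_cons, Multiset.card_cons]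
  split_ifs with hc
  · rw [Finset.insert_eq_of_mem (Multiset.mem_toFinset.2 hc),
      show Multiset.card M + 1 - M.toFinset.card = Multiset.card M - M.toFinset.card + 1 by omega]
    ring
  · rw [Finset.card_insert_of_notMem (by simpa using hc),
      show M.toFinset.card + 1 - 1 = M.toFinset.card - 1 + 1 by omega]
    simp only [Nat.add_sub_add_right]
    ring

end Weight

def partitionParts (n : ℕ) : Finset (Multiset ℕ) :=
  (univ : Finset n.Partition).map ⟨Nat.Partition.parts, fun _ _ => Nat.Partition.ext⟩

theorem mem_partitionParts {n : ℕ} {M : Multiset ℕ} :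
    M ∈ partitionParts n ↔ (∀ i ∈ M, 0 < i) ∧ M.sum = n := by
  simp only [partitionParts, Finset.mem_map, Finset.mem_univ, true_and]
  exact ⟨by rintro ⟨π, rfl⟩; exact ⟨fun _ => π.parts_pos, π.parts_sum⟩,
    fun ⟨hpos, hsum⟩ => ⟨⟨M, hpos _, hsum⟩, rfl⟩⟩

theorem sum_partition_eq_sum_partitionParts {β : Type*} [AddCommMonoid β] (n : ℕ)
    (f : Multiset ℕ → β) : ∑ π : n.Partition, f π.parts = ∑ M ∈ partitionParts n, f M := by
  rw [partitionParts, Finset.sum_map]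
  rfl

theorem partitionParts_zero : partitionParts 0 = {0} := by
  ext M
  rw [mem_partitionParts, Finset.mem_singleton]
  refine ⟨fun ⟨hpos, hsum⟩ => Multiset.eq_zero_of_forall_notMem fun x hx => ?_, ?_⟩
  · have := Multiset.le_sum_of_mem hx
    have := hpos x hx
    omega
  · rintro rfl
    simp

section Partitions

variable {n : ℕ} {M : Multiset ℕ}

theorem pos_of_mem_partitionParts (hM : M ∈ partitionParts n) {x : ℕ} (hx : x ∈ M) : 0 < x :=
  (mem_partitionParts.1 hM).1 x hx

theorem sup_le_of_mem_partitionParts (hM : M ∈ partitionParts n) : M.sup ≤ n :=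
  Multiset.sup_le.2 fun _ hx => (mem_partitionParts.1 hM).2 ▸ Multiset.le_sum_of_mem hx

theorem ne_zero_of_mem_partitionParts (hM : M ∈ partitionParts n) (hn : n ≠ 0) : M ≠ 0 := by
  rintro rfl
  exact hn (mem_partitionParts.1 hM).2.symm

theorem minPart_pos (hM : M ∈ partitionParts n) (hn : n ≠ 0) : 0 < minPart M :=
  pos_of_mem_partitionParts hM (minPart_mem (ne_zero_of_mem_partitionParts hM hn))

theorem cons_mem_partitionParts (hM : M ∈ partitionParts n) {c : ℕ} (hc : 0 < c) :
    c ::ₘ M ∈ partitionParts (n + c) := by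
  obtain ⟨hpos, hsum⟩ := mem_partitionParts.1 hM
  refine mem_partitionParts.2 ⟨fun x hx => ?_, by rw [Multiset.sum_cons, hsum, add_comm]⟩
  rcases Multiset.mem_cons.1 hx with rfl | hx
  exacts [hc, hpos x hx]

theorem erase_mem_partitionParts {c : ℕ} (hM : M ∈ partitionParts (n + c)) (hc : c ∈ M) :
    M.erase c ∈ partitionParts n := by
  obtain ⟨hpos, hsum⟩ := mem_partitionParts.1 hM
  refine mem_partitionParts.2 ⟨fun x hx => hpos x (Multiset.mem_of_mem_erase hx), ?_⟩
  have := Multiset.sum_erase hc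
  omega

theorem cons_erase_mem_partitionParts (hM : M ∈ partitionParts n) {a b n' : ℕ} (hb : b ∈ M)
    (ha : 0 < a) (h : n + a = n' + b) : a ::ₘ M.erase b ∈ partitionParts n' := by
  have hbn : b ≤ n := (Multiset.le_sup hb).trans (sup_le_of_mem_partitionParts hM)
  obtain rfl : n' = n - b + a := by omega
  rw [← Nat.sub_add_cancel hbn] at hM
  exact cons_mem_partitionParts (erase_mem_partitionParts hM hb) ha

end Partitions

def lowerTop (m : ℕ) (M : Multiset ℕ) : Multiset ℕ := (M.sup - m) ::ₘ M.erase M.sup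

def raiseBottom (m : ℕ) (E : Multiset ℕ) : Multiset ℕ :=
  (minPart E + m) ::ₘ E.erase (minPart E)

theorem minPart_lowerTop {M : Multiset ℕ} {m : ℕ} (hd : M.sup - minPart M ≤ m) :
    minPart (lowerTop m M) = M.sup - m :=
  minPart_cons_of_forall_le fun x hx => by
    have := minPart_le (Multiset.mem_of_mem_erase hx)
    omega

theorem sup_lowerTop_le (m : ℕ) (M : Multiset ℕ) : (lowerTop m M).sup ≤ M.sup := by
  rw [lowerTop, Multiset.sup_cons, sup_le_iff, Multiset.sup_le]
  exact ⟨Nat.sub_le _ _, fun x hx => Multiset.le_sup (Multiset.mem_of_mem_erase hx)⟩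

theorem raiseBottom_lowerTop {M : Multiset ℕ} {m : ℕ} (hd : M.sup - minPart M ≤ m)
    (hl : m < M.sup) : raiseBottom m (lowerTop m M) = M := by
  rw [raiseBottom, minPart_lowerTop hd, lowerTop, Multiset.erase_cons_head,
    Nat.sub_add_cancel hl.le, Multiset.cons_erase (sup_mem_of_lt_sup hl)]

theorem sup_raiseBottom {E : Multiset ℕ} {m : ℕ} (hd : E.sup - minPart E ≤ m) :
    (raiseBottom m E).sup = minPart E + m := by
  rw [raiseBottom, Multiset.sup_cons, sup_eq_left, Multiset.sup_le]
  intro x hx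
  have := Multiset.le_sup (Multiset.mem_of_mem_erase hx)
  omega

theorem minPart_le_minPart_raiseBottom (m : ℕ) (E : Multiset ℕ) :
    minPart E ≤ minPart (raiseBottom m E) := by
  unfold raiseBottom
  have hmem := minPart_mem (Multiset.cons_ne_zero (a := minPart E + m) (m := E.erase (minPart E)))
  rcases Multiset.mem_cons.1 hmem with h | h
  · omega
  · exact minPart_le (Multiset.mem_of_mem_erase h)

theorem lowerTop_raiseBottom {E : Multiset ℕ} (hE : E ≠ 0) {m : ℕ}
    (hd : E.sup - minPart E ≤ m) : lowerTop m (raiseBottom m E) = E := by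
  rw [lowerTop, sup_raiseBottom hd, raiseBottom, Multiset.erase_cons_head, Nat.add_sub_cancel,
    Multiset.cons_erase (minPart_mem hE)]

section WeightSums

variable {R : Type*} [CommRing R] (t : R)

def weightSumMaxEq (n m : ℕ) : R :=
  ∑ M ∈ partitionParts n with M.sup = m, partWeight t M

def weightSumMaxLE (n m : ℕ) : R :=
  ∑ M ∈ partitionParts n with M.sup ≤ m, partWeight t M

def windowSum (n m : ℕ) : R :=
  ∑ M ∈ partitionParts n with M.sup - minPart M < m ∧ m ≤ M.sup, partWeight t M

def windowConsSum (n m : ℕ) : R :=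
  ∑ M ∈ partitionParts n with M.sup - minPart M ≤ m ∧ m < M.sup,
    partWeight t ((M.sup - m) ::ₘ M)

variable {t}

theorem weightSumMaxEq_add_eq_sum_cons {N m : ℕ} (hm : 0 < m) :
    weightSumMaxEq t (N + m) m =
      ∑ E ∈ partitionParts N with E.sup ≤ m, partWeight t (m ::ₘ E) := by
  have hmem : ∀ M ∈ {M ∈ partitionParts (N + m) | M.sup = m}, m ∈ M := fun M hM => by
    obtain ⟨hM, rfl⟩ := Finset.mem_filter.1 hM
    exact Multiset.sup_mem_of_ne_zero (ne_zero_of_mem_partitionParts hM (by omega))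
  refine Finset.sum_nbij' (fun M => M.erase m) (fun E => m ::ₘ E) (fun M hM => ?_)
    (fun E hE => ?_) (fun M hM => Multiset.cons_erase (hmem M hM))
    (fun E _ => Multiset.erase_cons_head m E)
    (fun M hM => by rw [Multiset.cons_erase (hmem M hM)])
  · obtain ⟨hM', hsup⟩ := Finset.mem_filter.1 hM
    refine Finset.mem_filter.2 ⟨erase_mem_partitionParts hM' (hmem M hM), ?_⟩
    exact (Multiset.sup_mono (Multiset.subset_of_le (Multiset.erase_le m M))).trans hsup.le
  · obtain ⟨hE, hsup⟩ := Finset.mem_filter.1 hE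
    exact Finset.mem_filter.2 ⟨cons_mem_partitionParts hE hm, by
      rw [Multiset.sup_cons, sup_eq_left.2 hsup]⟩

theorem weightSumMaxEq_add {N m : ℕ} (hN : N ≠ 0) (hm : 0 < m) :
    weightSumMaxEq t (N + m) m = (t - 1) * weightSumMaxLE t N m + weightSumMaxEq t N m := by
  rw [weightSumMaxEq_add_eq_sum_cons hm, weightSumMaxLE, weightSumMaxEq, Finset.mul_sum,
    Finset.sum_filter, Finset.sum_filter, Finset.sum_filter, ← Finset.sum_add_distrib]
  refine Finset.sum_congr rfl fun E hE => ?_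
  have hE0 := ne_zero_of_mem_partitionParts hE hN
  rw [partWeight_cons t hE0]
  by_cases hle : E.sup ≤ m
  · simp only [if_pos hle, mem_iff_sup_eq_of_sup_le hE0 hle]
    split_ifs <;> ring
  · rw [if_neg hle, if_neg hle, if_neg (by omega)]
    ring

theorem windowConsSum_add_eq_sum_cons {N m : ℕ} (hN : N ≠ 0) :
    windowConsSum t (N + m) m =
      ∑ E ∈ partitionParts N with E.sup - minPart E ≤ m,
        partWeight t ((minPart E + m) ::ₘ E) := by
  refine Finset.sum_nbij' (lowerTop m) (raiseBottom m) (fun M hM => ?_) (fun E hE => ?_)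
    (fun M hM => ?_) (fun E hE => ?_) (fun M hM => ?_)
  · obtain ⟨hM, hd, hl⟩ := Finset.mem_filter.1 hM
    have := sup_lowerTop_le m M
    have := minPart_lowerTop hd
    refine Finset.mem_filter.2
      ⟨cons_erase_mem_partitionParts hM (sup_mem_of_lt_sup hl) (by omega) (by omega), ?_⟩
    omega
  · obtain ⟨hE, hd⟩ := Finset.mem_filter.1 hE
    have hE0 := ne_zero_of_mem_partitionParts hE hN
    have := minPart_pos hE hN
    have := sup_raiseBottom hd (m := m)
    have := minPart_le_minPart_raiseBottom m E
    refine Finset.mem_filter.2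
      ⟨cons_erase_mem_partitionParts hE (minPart_mem hE0) (by omega) (by omega), ?_⟩
    omega
  · obtain ⟨-, hd, hl⟩ := Finset.mem_filter.1 hM
    exact raiseBottom_lowerTop hd hl
  · obtain ⟨hE, hd⟩ := Finset.mem_filter.1 hE
    exact lowerTop_raiseBottom (ne_zero_of_mem_partitionParts hE hN) hd
  · obtain ⟨-, hd, hl⟩ := Finset.mem_filter.1 hM
    rw [minPart_lowerTop hd, Nat.sub_add_cancel hl.le, lowerTop, Multiset.cons_swap,
      Multiset.cons_erase (sup_mem_of_lt_sup hl)]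

theorem windowConsSum_add {N m : ℕ} (hN : N ≠ 0) :
    windowConsSum t (N + m) m = (t - 1) * weightSumMaxLE t N m + windowConsSum t N m := by
  rw [windowConsSum_add_eq_sum_cons hN, weightSumMaxLE, windowConsSum, Finset.mul_sum,
    Finset.sum_filter, Finset.sum_filter, Finset.sum_filter, ← Finset.sum_add_distrib]
  refine Finset.sum_congr rfl fun E hE => ?_
  have hE0 := ne_zero_of_mem_partitionParts hE hN
  have hs := minPart_pos hE hN
  have hsl := minPart_le_sup E
  rw [partWeight_cons t hE0, partWeight_cons t hE0]
  by_cases hle : E.sup ≤ m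
  · have hd : E.sup - minPart E ≤ m := by omega
    have hnot : minPart E + m ∉ E := fun h => by
      have := Multiset.le_sup h
      omega
    simp only [hd, hle, hnot, not_lt.2 hle, and_false, if_true, if_false]
    ring
  by_cases hd : E.sup - minPart E ≤ m
  · have hlt : m < E.sup := by omega
    simp only [hd, hle, hlt, and_self, if_true, if_false, minPart_add_mem_iff hE0 hd,
      sup_sub_mem_iff hd hlt, zero_add]
  · simp only [hd, hle, false_and, if_false]
    ring

theorem weightSumMaxEq_of_lt {n m : ℕ} (h : n < m) : weightSumMaxEq t n m = 0 :=
  Finset.sum_eq_zero fun M hM => by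
    obtain ⟨hM, hl⟩ := Finset.mem_filter.1 hM
    exact absurd (sup_le_of_mem_partitionParts hM) (by omega)

theorem windowConsSum_of_le {n m : ℕ} (h : n ≤ m) : windowConsSum t n m = 0 :=
  Finset.sum_eq_zero fun M hM => by
    obtain ⟨hM, -, hl⟩ := Finset.mem_filter.1 hM
    exact absurd (sup_le_of_mem_partitionParts hM) (by omega)

theorem windowSum_of_lt {n m : ℕ} (h : n < m) : windowSum t n m = 0 :=
  Finset.sum_eq_zero fun M hM => by
    obtain ⟨hM, -, hl⟩ := Finset.mem_filter.1 hM
    exact absurd (sup_le_of_mem_partitionParts hM) (by omega)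

theorem weightSumMaxEq_self {m : ℕ} (hm : 0 < m) : weightSumMaxEq t m m = 1 := by
  have h := weightSumMaxEq_add_eq_sum_cons (t := t) (N := 0) hm
  rw [zero_add] at h
  rw [h, partitionParts_zero, Finset.sum_filter, Finset.sum_singleton, if_pos (by simp)]
  simp [partWeight]

theorem weightSumMaxEq_sub_windowConsSum {n m : ℕ} (hn : n ≠ 0) (hm : 0 < m) :
    weightSumMaxEq t n m - windowConsSum t n m = if m ∣ n then 1 else 0 := by
  induction n using Nat.strong_induction_on with
  | _ n ih =>
  rcases lt_trichotomy n m with h | rfl | h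
  · rw [weightSumMaxEq_of_lt h, windowConsSum_of_le h.le,
      if_neg (Nat.not_dvd_of_pos_of_lt (by omega) h), sub_zero]
  · rw [weightSumMaxEq_self hm, windowConsSum_of_le le_rfl, if_pos dvd_rfl, sub_zero]
  · obtain ⟨N, rfl⟩ : ∃ N, n = N + m := ⟨n - m, by omega⟩
    have hN : N ≠ 0 := by omega
    simp only [Nat.dvd_add_self_right]
    rw [weightSumMaxEq_add hN hm, windowConsSum_add hN, ← ih N (by omega) hN]
    ring

theorem windowSum_eq {n : ℕ} (hn : n ≠ 0) (m : ℕ) :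
    windowSum t n m =
      t * windowSum t n (m + 1) + (weightSumMaxEq t n m - windowConsSum t n m) := by
  rw [windowSum, windowSum, weightSumMaxEq, windowConsSum, Finset.sum_filter, Finset.sum_filter,
    Finset.sum_filter, Finset.sum_filter, Finset.mul_sum, ← Finset.sum_sub_distrib,
    ← Finset.sum_add_distrib]
  refine Finset.sum_congr rfl fun M hM => ?_
  have hs := minPart_pos hM hn
  have hsl := minPart_le_sup M
  rw [partWeight_cons t (ne_zero_of_mem_partitionParts hM hn)]
  by_cases hd : M.sup - minPart M ≤ m ∧ m < M.sup
  · simp only [sup_sub_mem_iff hd.1 hd.2]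
    split_ifs <;> first | ring1 | (exfalso; omega)
  · rw [if_neg hd]
    split_ifs <;> first | ring1 | (exfalso; omega)

theorem windowSum_eq_sum_divisors {n m : ℕ} (hn : n ≠ 0) (hm : 0 < m) :
    windowSum t n m = ∑ d ∈ n.divisors with m ≤ d, t ^ (d - m) := by
  by_cases h : n < m
  · rw [windowSum_of_lt h, Finset.sum_eq_zero fun d hd => ?_]
    obtain ⟨hd, hmd⟩ := Finset.mem_filter.1 hd
    exact absurd (Nat.divisor_le hd) (by omega)
  rw [windowSum_eq hn, weightSumMaxEq_sub_windowConsSum hn hm,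
    windowSum_eq_sum_divisors hn (m := m + 1) (by omega), Finset.sum_filter, Finset.sum_filter,
    Finset.mul_sum]
  have hdvd : (if m ∣ n then (1 : R) else 0) = ∑ d ∈ n.divisors, if d = m then 1 else 0 := by
    simp only [Finset.sum_ite_eq', Nat.mem_divisors, and_iff_left hn]
  rw [hdvd, ← Finset.sum_add_distrib]
  refine Finset.sum_congr rfl fun d _ => ?_
  rcases lt_trichotomy d m with hlt | rfl | hgt
  · simp only [if_neg (show ¬m + 1 ≤ d by omega), if_neg hlt.ne, if_neg (show ¬m ≤ d by omega)]
    ring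
  · simp
  · rw [if_pos (show m + 1 ≤ d by omega), if_neg hgt.ne', if_pos hgt.le, ← pow_succ',
      add_zero]
    congr 1
    omega
termination_by n + 1 - m

end WeightSums

theorem sum_Icc_add_eq_sum_filter {β : Type*} [AddCommMonoid β] (f : ℕ → β) {c s n : ℕ}
    (h : c + s ≤ n) : ∑ j ∈ Icc 1 s, f (c + j) = ∑ i ∈ Icc 1 n with c < i ∧ i ≤ c + s, f i := by
  rw [show ∑ j ∈ Icc 1 s, f (c + j) = ∑ i ∈ (Icc 1 s).map (addLeftEmbedding c), f i from
    (Finset.sum_map (Icc 1 s) (addLeftEmbedding c) f).symm, Finset.map_add_left_Icc]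
  refine Finset.sum_congr (Finset.ext fun i => ?_) fun _ _ => rfl
  simp only [Finset.mem_Icc, Finset.mem_filter]
  omega

section Field

variable {K : Type*} [Field K] {t : K}

theorem pow_mul_div_pow_eq_partWeight (ht : t ≠ 0) (M : Multiset ℕ) :
    t ^ (Multiset.card M - 1) * ((t - 1) / t) ^ (M.toFinset.card - 1) = partWeight t M := by
  rcases eq_or_ne M 0 with rfl | hM
  · simp [partWeight]
  have hQ : 0 < M.toFinset.card := Finset.card_pos.2 (Multiset.toFinset_nonempty.2 hM)
  have hQk : M.toFinset.card ≤ Multiset.card M := Multiset.toFinset_card_le M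
  rw [partWeight, div_pow, show Multiset.card M - 1 =
    (Multiset.card M - M.toFinset.card) + (M.toFinset.card - 1) by omega, pow_add]
  field_simp

theorem pow_mul_div_pow_mul_sum_eq (ht : t ≠ 0) (a : ℕ → K) {n : ℕ} {M : Multiset ℕ}
    (hM : M.sup ≤ n) :
    t ^ (Multiset.card M - 1) * ((t - 1) / t) ^ (M.toFinset.card - 1) *
        ∑ j ∈ Icc 1 (minPart M), a (M.sup - minPart M + j) =
      ∑ i ∈ Icc 1 n, if M.sup - minPart M < i ∧ i ≤ M.sup then a i * partWeight t M else 0 := by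
  have hsl := minPart_le_sup M
  rw [pow_mul_div_pow_eq_partWeight ht, sum_Icc_add_eq_sum_filter a (n := n) (by omega),
    Nat.sub_add_cancel hsl, Finset.mul_sum, Finset.sum_filter]
  refine Finset.sum_congr rfl fun i _ => ?_
  split_ifs <;> ring

theorem pow_mul_sum_div_pow_eq (ht : t ≠ 0) (a : ℕ → K) {d n : ℕ} (hd : d ≤ n) :
    t ^ d * ∑ i ∈ Icc 1 d, a i / t ^ i =
      ∑ i ∈ Icc 1 n, if i ≤ d then a i * t ^ (d - i) else 0 := by
  rw [← Finset.sum_filter, Finset.mul_sum]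
  refine Finset.sum_congr (Finset.ext fun i => ?_) fun i hi => ?_
  · simp only [Finset.mem_filter, Finset.mem_Icc]
    omega
  · rw [← Nat.sub_add_cancel (Finset.mem_filter.1 hi).2, pow_add, Nat.add_sub_cancel]
    field_simp

end Field

theorem theorem4_general (a : ℕ → ℂ) (t : ℂ) (ht0 : t ≠ 0) (n : ℕ) :
    ∑ π : n.Partition, t ^ (kParts π - 1) * ((t - 1) / t) ^ (qParts π - 1) *
        ∑ j ∈ Finset.Icc 1 (sPart π), a (lPart π - sPart π + j) =
    ∑ d ∈ n.divisors, t ^ d * ∑ i ∈ Finset.Icc 1 d, a i / t ^ i := by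
  calc _ = ∑ M ∈ partitionParts n, ∑ i ∈ Icc 1 n,
        if M.sup - minPart M < i ∧ i ≤ M.sup then a i * partWeight t M else 0 := by
        rw [← sum_partition_eq_sum_partitionParts]
        exact Finset.sum_congr rfl fun π _ => pow_mul_div_pow_mul_sum_eq ht0 a
          (Multiset.sup_le.2 fun _ => Nat.Partition.le_of_mem_parts)
    _ = ∑ i ∈ Icc 1 n, a i * windowSum t n i := by
        rw [Finset.sum_comm]
        refine Finset.sum_congr rfl fun i _ => ?_
        rw [windowSum, Finset.mul_sum, Finset.sum_filter]
    _ = ∑ i ∈ Icc 1 n, ∑ d ∈ n.divisors, if i ≤ d then a i * t ^ (d - i) else 0 := by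
        refine Finset.sum_congr rfl fun i hi => ?_
        have := Finset.mem_Icc.1 hi
        rw [windowSum_eq_sum_divisors (by omega) (by omega), Finset.mul_sum, Finset.sum_filter]
    _ = _ := by
        rw [Finset.sum_comm]
        exact Finset.sum_congr rfl fun d hd =>
          (pow_mul_sum_div_pow_eq ht0 a (Nat.divisor_le hd)).symm

/-- Theorem 4: weighted partition identity for the inverse Möbius-type transform. -/
theorem theorem4 (a : ℕ → ℂ) (t : ℂ) (ht0 : t ≠ 0) (ht1 : t ≠ 1) (n : ℕ) (hn : 1 ≤ n) :
    ∑ π : n.Partition, t ^ (kParts π - 1) * ((t - 1) / t) ^ (qParts π - 1) *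
        ∑ j ∈ Finset.Icc 1 (sPart π), a (lPart π - sPart π + j) =
    ∑ d ∈ n.divisors, t ^ d * ∑ i ∈ Finset.Icc 1 d, a i / t ^ i :=
  theorem4_general a t ht0 n
end

section
/- Let t, u ∈ ℂ, let m ≥ 1 be an integer, and let N ≥ 1 be an integer. Then the coefficient of q^N in the formal power series (over ℂ) t·u · q^m · (∏_{i=0}^{N} (1 − t·q^{m+i}))⁻¹ · ∏_{i=1}^{N} (1 − (1−u)·t·q^{m+i}) equals ∑_{π ∈ P(N), s(π) = m} t^{k(π)} u^{Q(π)}, the sum being over all partitions of N whose smallest part equals m. (This is the coefficient-of-q^N form of the generating-function identity, established in the proof of Theorem 1, (tuq^m/(1−tq^m)) · ∏_{i>m} (1−(1−u)tq^i)/(1−tq^i) for partitions with prescribed smallest part, with the infinite product truncated at exponent ≤ m+N, which does not affect the coefficient of q^N.) -/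
open Finset PowerSeries

/-!
Expanding `(1 - (1 - u) t q^j) / (1 - t q^j) = 1 + u ∑_{c ≥ 1} t^c q^{jc}` and
`t u q^m / (1 - t q^m) = u ∑_{c ≥ 1} t^c q^{mc}`, the series is `∏_{j=m}^{m+N} ∑_c w_j(c) q^{jc}`
with `w_j(c) = u t^c` for `c ≥ 1`, `w_j(0) = 1` for `j > m` and `w_m(0) = 0`. Choosing an exponent
`c_j` in each factor with `∑ j c_j = N` is choosing the partition of `N` in which `j` occurs `c_j`
times; its weight `∏ w_j(c_j)` vanishes unless `m` occurs, and then equals `t^{k(π)} u^{Q(π)}`.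
Parts of a partition of `N` are at most `N < m + N + 1`, so the truncation loses nothing.
-/

namespace PowerSeries

variable {R : Type*} [CommRing R]

theorem mk_pow_mul_one_sub_C_mul_X (a : R) : mk (a ^ ·) * (1 - C a * X) = 1 := by
  have h := congrArg (rescale a) (mk_one_mul_one_sub_eq_one R)
  rwa [map_mul, map_sub, map_one, rescale_X,
    show rescale a (mk 1) = mk (a ^ ·) by ext n; simp [coeff_rescale]] at h

theorem one_sub_C_mul_X_mul_mk (w u t : R) :
    (1 - C t * X) * mk (fun c ↦ if c = 0 then w else u * t ^ c) = C w + C (t * (u - w)) * X := by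
  have hsplit : mk (fun c ↦ if c = 0 then w else u * t ^ c) = C (w - u) + C u * mk (t ^ ·) := by
    ext c
    rcases eq_or_ne c 0 with rfl | hc <;> simp [coeff_C, *]
  rw [hsplit, mul_add, mul_left_comm, mul_comm _ (mk _), mk_pow_mul_one_sub_C_mul_X]
  simp only [map_mul, map_sub]
  ring

end PowerSeries

namespace Nat.Partition

section

variable {R : Type*} [CommSemiring R]

/-- Unlike in `Nat.Partition.genFun`, the weight `f i 0` of an absent part is kept, so a factor
can force its part to occur. -/
noncomputable def partFactor (f : ℕ → ℕ → R) (i : ℕ) : R⟦X⟧ :=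
  PowerSeries.mk fun n ↦ if i ∣ n then f i (n / i) else 0

theorem toFinsuppAntidiag_apply {n : ℕ} (p : n.Partition) (i : ℕ) :
    p.toFinsuppAntidiag i = p.parts.count i * i := rfl

theorem exists_toFinsuppAntidiag_eq {n : ℕ} {g : ℕ →₀ ℕ} (hsum : g.sum (fun _ a ↦ a) = n)
    (hdvd : ∀ i, i ∣ g i) : ∃ p : n.Partition, p.toFinsuppAntidiag = g := by
  classical
  have hmult (i : ℕ) : g i / i * i = g i := Nat.div_mul_cancel (hdvd i)
  let c : ℕ →₀ ℕ := Finsupp.onFinset g.support (fun i ↦ g i / i) fun i hi ↦ by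
    rw [Finsupp.mem_support_iff]; rintro h; simp [h] at hi
  have hc (i : ℕ) : c i = g i / i := rfl
  refine ⟨⟨Finsupp.toMultiset c, fun {i} hi ↦ ?_, ?_⟩, ?_⟩
  · rw [Finsupp.mem_toMultiset, Finsupp.mem_support_iff, hc] at hi
    exact Nat.pos_of_ne_zero fun h ↦ by simp [h] at hi
  · rw [Finset.sum_multiset_count, Finsupp.toFinset_toMultiset, ← hsum]
    simp only [Finsupp.count_toMultiset, smul_eq_mul, hc]
    rw [Finsupp.sum, Finset.sum_subset Finsupp.support_onFinset_subset fun i _ hi ↦ by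
      rw [Finsupp.notMem_support_iff, hc] at hi; rw [hi, zero_mul]]
    exact Finset.sum_congr rfl fun i _ ↦ hmult i
  · ext i
    rw [toFinsuppAntidiag_apply]
    simp only [Finsupp.count_toMultiset, hc, hmult]

theorem coeff_partFactor (f : ℕ → ℕ → R) (i n : ℕ) :
    coeff n (partFactor f i) = if i ∣ n then f i (n / i) else 0 :=
  coeff_mk _ _

theorem coeff_prod_partFactor (f : ℕ → ℕ → R) (s : Finset ℕ) (n : ℕ) :
    coeff n (∏ i ∈ s, partFactor f i) =
      ∑ p : n.Partition with p.parts.toFinset ⊆ s, ∏ i ∈ s, f i (p.parts.count i) := by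
  classical
  rw [coeff_prod]
  refine (sum_of_injOn toFinsuppAntidiag (toFinsuppAntidiag_injective n).injOn ?_ ?_ ?_).symm
  · intro p hp
    have hmem := mem_finsuppAntidiag'.mp p.toFinsuppAntidiag_mem_finsuppAntidiag
    exact mem_finsuppAntidiag'.mpr ⟨hmem.1, (mem_filter.mp hp).2⟩
  · intro g hg hg'
    obtain ⟨hsum, hsupp⟩ := mem_finsuppAntidiag'.mp hg
    obtain ⟨i, hi, hndvd⟩ : ∃ i ∈ s, ¬ i ∣ g i := by
      by_contra! hdvd
      obtain ⟨p, rfl⟩ := exists_toFinsuppAntidiag_eq hsum fun i ↦ by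
        by_cases hi : i ∈ s
        · exact hdvd i hi
        · rw [Finsupp.notMem_support_iff.mp fun h ↦ hi (hsupp h)]; exact dvd_zero i
      exact hg' ⟨p, mem_filter.mpr ⟨mem_univ p, hsupp⟩, rfl⟩
    exact prod_eq_zero hi (by rw [coeff_partFactor, if_neg hndvd])
  · intro p _
    refine prod_congr rfl fun i _ ↦ ?_
    rw [coeff_partFactor, toFinsuppAntidiag_apply, if_pos (dvd_mul_left i _)]
    rcases eq_or_ne i 0 with rfl | hi
    · rw [Multiset.count_eq_zero_of_notMem fun h ↦ (p.parts_pos h).ne rfl, Nat.div_zero]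
    · rw [Nat.mul_div_cancel _ (Nat.pos_of_ne_zero hi)]

end

theorem partFactor_eq_expand {R : Type*} [CommRing R] (f : ℕ → ℕ → R) {i : ℕ} (hi : i ≠ 0) :
    partFactor f i = expand i hi (PowerSeries.mk (f i)) := by
  ext n
  rw [coeff_partFactor, coeff_expand, coeff_mk]

end Nat.Partition

theorem sPart_eq_iff {n m : ℕ} (hm : m ≠ 0) (p : n.Partition) :
    sPart p = m ↔ m ∈ p.parts ∧ ∀ i ∈ p.parts, m ≤ i := by
  unfold sPart
  constructor
  · intro h
    cases hmin : p.parts.toFinset.min with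
    | top => rw [hmin] at h; exact absurd h.symm hm
    | coe a =>
      rw [hmin, WithTop.untopD_coe] at h
      subst h
      refine ⟨Multiset.mem_toFinset.mp (Finset.mem_of_min hmin), fun i hi ↦ ?_⟩
      exact WithTop.coe_le_coe.mp (hmin ▸ Finset.min_le (Multiset.mem_toFinset.mpr hi))
  · rintro ⟨hmem, hle⟩
    have hmin : p.parts.toFinset.min = m :=
      le_antisymm (Finset.min_le (Multiset.mem_toFinset.mpr hmem))
        (Finset.le_min fun i hi ↦ WithTop.coe_le_coe.mpr (hle i (Multiset.mem_toFinset.mp hi)))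
    rw [hmin]
    rfl

namespace SmallestPart

open Nat.Partition

section Weight

variable {R : Type*} [CommSemiring R] (t u : R) (m : ℕ)

def weight (i c : ℕ) : R := if c = 0 then (if i = m then 0 else 1) else u * t ^ c

theorem prod_weight_count {n : ℕ} (p : n.Partition) {s : Finset ℕ}
    (hps : p.parts.toFinset ⊆ s) (hms : m ∈ s) :
    ∏ i ∈ s, weight t u m i (p.parts.count i) =
      if m ∈ p.parts then t ^ kParts p * u ^ qParts p else 0 := by
  classical
  split_ifs with hmp
  · rw [← prod_subset hps fun i _ hi ↦ by
      rw [Multiset.mem_toFinset] at hi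
      rw [weight, if_pos (Multiset.count_eq_zero.mpr hi), if_neg (by rintro rfl; exact hi hmp)]]
    rw [prod_congr rfl fun i hi ↦ by
      rw [weight, if_neg (Multiset.count_ne_zero.mpr (Multiset.mem_toFinset.mp hi))],
      prod_mul_distrib, prod_const, prod_pow_eq_pow_sum, Multiset.toFinset_sum_count_eq, kParts,
      qParts, mul_comm]
  · exact prod_eq_zero hms (by rw [weight, if_pos (Multiset.count_eq_zero.mpr hmp), if_pos rfl])

theorem coeff_prod_partFactor_weight {M n : ℕ} (hm : m ≠ 0) (hmM : m < M) (hnM : n < M) :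
    coeff n (∏ j ∈ Ico m M, partFactor (weight t u m) j) =
      ∑ p : n.Partition with sPart p = m, t ^ kParts p * u ^ qParts p := by
  classical
  rw [coeff_prod_partFactor, sum_congr rfl fun p hp ↦
    prod_weight_count t u m p (mem_filter.mp hp).2 (left_mem_Ico.mpr hmM), sum_ite,
    sum_const_zero, add_zero, filter_filter]
  refine sum_congr (filter_congr fun p _ ↦ ?_) fun _ _ ↦ rfl
  rw [sPart_eq_iff hm, and_comm, and_congr_right_iff]
  refine fun _ ↦ ⟨fun hsub i hi ↦ (mem_Ico.mp (hsub (Multiset.mem_toFinset.mpr hi))).1,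
    fun hle i hi ↦ ?_⟩
  rw [Multiset.mem_toFinset] at hi
  exact mem_Ico.mpr ⟨hle i hi, (le_of_mem_parts hi).trans_lt hnM⟩

end Weight

section Series

variable {R : Type*} [CommRing R] (t u : R) (m : ℕ)

theorem one_sub_mul_partFactor_weight {i : ℕ} (hi : i ≠ 0) :
    (1 - C t * X ^ i) * partFactor (weight t u m) i =
      C (if i = m then 0 else 1) + C (t * (u - if i = m then 0 else 1)) * X ^ i := by
  have h := congrArg (expand i hi) (one_sub_C_mul_X_mul_mk (if i = m then 0 else 1) u t)
  rw [partFactor_eq_expand _ hi]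
  simp only [map_add, map_sub, map_mul, map_one, expand_C, expand_X] at h ⊢
  exact h

theorem one_sub_mul_partFactor_weight_self (hm : m ≠ 0) :
    (1 - C t * X ^ m) * partFactor (weight t u m) m = C (t * u) * X ^ m := by
  rw [one_sub_mul_partFactor_weight t u m hm, if_pos rfl, map_zero, zero_add, sub_zero]

theorem one_sub_mul_partFactor_weight_of_ne {i : ℕ} (hi : i ≠ 0) (him : i ≠ m) :
    (1 - C t * X ^ i) * partFactor (weight t u m) i = 1 - C ((1 - u) * t) * X ^ i := by
  rw [one_sub_mul_partFactor_weight t u m hi, if_neg him, map_one,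
    show t * (u - 1) = -((1 - u) * t) by ring, map_neg, neg_mul, ← sub_eq_add_neg]

end Series

variable {k : Type*} [Field k] (t u : k) (m : ℕ)

theorem prod_partFactor_weight {M : ℕ} (hm : m ≠ 0) (hmM : m < M) :
    ∏ j ∈ Ico m M, partFactor (weight t u m) j =
      C (t * u) * X ^ m * (∏ j ∈ Ico m M, (1 - C t * X ^ j))⁻¹ *
        ∏ j ∈ Ico (m + 1) M, (1 - C ((1 - u) * t) * X ^ j) := by
  have hD : constantCoeff (∏ j ∈ Ico m M, (1 - C t * X ^ j : k⟦X⟧)) ≠ 0 := by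
    rw [map_prod, prod_eq_one fun j hj ↦ ?_]
    · exact one_ne_zero
    have hj0 : j ≠ 0 := by have := (mem_Ico.mp hj).1; omega
    simp [hj0]
  rw [mul_right_comm, eq_mul_inv_iff_mul_eq hD, ← prod_mul_distrib, prod_eq_prod_Ico_succ_bot hmM,
    mul_comm (partFactor _ m), one_sub_mul_partFactor_weight_self t u m hm]
  refine congrArg _ (prod_congr rfl fun j hj ↦ ?_)
  have hmj := (mem_Ico.mp hj).1
  rw [mul_comm, one_sub_mul_partFactor_weight_of_ne t u m (by omega) (by omega)]

end SmallestPart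

theorem smallestPart_genFun_general (t u : ℂ) (m : ℕ) (hm : 1 ≤ m) (N : ℕ) :
    PowerSeries.coeff N
      (PowerSeries.C (t * u) * (PowerSeries.X : PowerSeries ℂ) ^ m *
        (∏ i ∈ Finset.range (N + 1),
          (1 - PowerSeries.C t * (PowerSeries.X : PowerSeries ℂ) ^ (m + i)))⁻¹ *
        ∏ i ∈ Finset.Icc 1 N,
          (1 - PowerSeries.C ((1 - u) * t) * (PowerSeries.X : PowerSeries ℂ) ^ (m + i))) =
    ∑ π ∈ Finset.univ.filter (fun π : N.Partition => sPart π = m),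
      t ^ kParts π * u ^ qParts π := by
  have hden : ∏ i ∈ range (N + 1), (1 - C t * X ^ (m + i) : ℂ⟦X⟧) =
      ∏ j ∈ Ico m (m + N + 1), (1 - C t * X ^ j) := by
    rw [prod_Ico_eq_prod_range, show m + N + 1 - m = N + 1 by omega]
  have hnum : ∏ i ∈ Icc 1 N, (1 - C ((1 - u) * t) * X ^ (m + i) : ℂ⟦X⟧) =
      ∏ j ∈ Ico (m + 1) (m + N + 1), (1 - C ((1 - u) * t) * X ^ j) := by
    rw [← Ico_add_one_right_eq_Icc, prod_Ico_add (fun j ↦ 1 - C ((1 - u) * t) * X ^ j),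
      add_comm 1, show N + 1 + m = m + N + 1 by omega]
  rw [hden, hnum, ← SmallestPart.prod_partFactor_weight t u m (by omega) (by omega),
    SmallestPart.coeff_prod_partFactor_weight t u m (by omega) (by omega) (by omega)]

/-- Generating function (coefficient-of-`q^N` form) for partitions with prescribed
smallest part `m` (from the proof of Theorem 1). -/
theorem smallestPart_genFun (t u : ℂ) (m : ℕ) (hm : 1 ≤ m) (N : ℕ) (hN : 1 ≤ N) :
    PowerSeries.coeff N
      (PowerSeries.C (t * u) * (PowerSeries.X : PowerSeries ℂ) ^ m *
        (∏ i ∈ Finset.range (N + 1),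
          (1 - PowerSeries.C t * (PowerSeries.X : PowerSeries ℂ) ^ (m + i)))⁻¹ *
        ∏ i ∈ Finset.Icc 1 N,
          (1 - PowerSeries.C ((1 - u) * t) * (PowerSeries.X : PowerSeries ℂ) ^ (m + i))) =
    ∑ π ∈ Finset.univ.filter (fun π : N.Partition => sPart π = m),
      t ^ kParts π * u ^ qParts π :=
  smallestPart_genFun_general t u m hm N
end
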